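/- Define u₂(x,t) = −36 e^{4x} ( 18 e^{4(x+3it)} + (8−8i) e^{2x+24it} + 9 e^{12it} + (8+8i) e^{2x} ) + 2592 e^{12(x+it)} + e^{12it}. Then u₂(x,t) ≠ 0 for all x ≥ 0 and all t ∈ ℝ. Consequently, the exact solution u = u₁/u₂ of the defocusing NLS (with u₁(x,t) = 72 e^{2(x+8it)} ( (72+72i) e^{6(x+2it)} − (2+2i) e^{2(x+6it)} + 72i e^{8x} − i )) is smooth on the quarter plane {x ≥ 0, t ≥ 0}. -/

import Mathlib

open Complex Set

noncomputable section

/-- Numerator of the exact solution generated with poles `k₁ = i/2`, `k₂ = i` and residue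
data `c₁ = 1`, `c₂ = 1+i`. -/
def u₁ (x t : ℝ) : ℂ :=
  72 * Complex.exp (2 * ((x : ℂ) + 8 * Complex.I * t)) *
    ((72 + 72 * Complex.I) * Complex.exp (6 * ((x : ℂ) + 2 * Complex.I * t)) -
      (2 + 2 * Complex.I) * Complex.exp (2 * ((x : ℂ) + 6 * Complex.I * t)) +
      72 * Complex.I * Complex.exp (8 * (x : ℂ)) - Complex.I)

/-- Denominator of the exact solution generated with poles `k₁ = i/2`, `k₂ = i` and
residue data `c₁ = 1`, `c₂ = 1+i`. -/
def u₂ (x t : ℝ) : ℂ :=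
  -36 * Complex.exp (4 * (x : ℂ)) *
      (18 * Complex.exp (4 * ((x : ℂ) + 3 * Complex.I * t)) +
        (8 - 8 * Complex.I) * Complex.exp (2 * (x : ℂ) + 24 * Complex.I * t) +
        9 * Complex.exp (12 * Complex.I * t) +
        (8 + 8 * Complex.I) * Complex.exp (2 * (x : ℂ))) +
    2592 * Complex.exp (12 * ((x : ℂ) + Complex.I * t)) +
    Complex.exp (12 * Complex.I * t)

@[fun_prop] theorem contDiff_ofReal' : ContDiff ℝ (⊤ : ℕ∞) (Complex.ofReal) := Complex.ofRealCLM.contDiff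

@[fun_prop] theorem contDiff_cexp' {f : ℝ × ℝ → ℂ} (hf : ContDiff ℝ (⊤ : ℕ∞) f) :
    ContDiff ℝ (⊤ : ℕ∞) fun x => Complex.exp (f x) := hf.cexp

lemma norm_cexp (z : ℂ) : ‖Complex.exp z‖ = Real.exp z.re := by
  simp [Complex.norm_exp]

lemma u₂_ne (x : ℝ) (hx : 0 ≤ x) (t : ℝ) : u₂ x t ≠ 0 := by
  set A : ℂ := 2592 * Complex.exp (12 * ((x : ℂ) + Complex.I * t)) with hA
  have hAnorm : ‖A‖ = 2592 * Real.exp (12 * x) := by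
    rw [hA, norm_mul, norm_cexp]
    norm_num
  have hdiff : u₂ x t - A =
      -36 * Complex.exp (4 * (x : ℂ)) *
        (18 * Complex.exp (4 * ((x : ℂ) + 3 * Complex.I * t)) +
          (8 - 8 * Complex.I) * Complex.exp (2 * (x : ℂ) + 24 * Complex.I * t) +
          9 * Complex.exp (12 * Complex.I * t) +
          (8 + 8 * Complex.I) * Complex.exp (2 * (x : ℂ))) +
        Complex.exp (12 * Complex.I * t) := by
    rw [hA]; unfold u₂; ring
  have h88 : ‖(8 : ℂ) - 8 * Complex.I‖ ≤ 16 := by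
    calc ‖(8 : ℂ) - 8 * Complex.I‖ ≤ ‖(8 : ℂ)‖ + ‖8 * Complex.I‖ := norm_sub_le _ _
    _ = 16 := by simp; norm_num
  have h88' : ‖(8 : ℂ) + 8 * Complex.I‖ ≤ 16 := by
    calc ‖(8 : ℂ) + 8 * Complex.I‖ ≤ ‖(8 : ℂ)‖ + ‖8 * Complex.I‖ := norm_add_le _ _
    _ = 16 := by simp; norm_num
  have hS : ‖(18 * Complex.exp (4 * ((x : ℂ) + 3 * Complex.I * t)) +
          (8 - 8 * Complex.I) * Complex.exp (2 * (x : ℂ) + 24 * Complex.I * t) +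
          9 * Complex.exp (12 * Complex.I * t) +
          (8 + 8 * Complex.I) * Complex.exp (2 * (x : ℂ)))‖ ≤
      18 * Real.exp (4 * x) + 16 * Real.exp (2 * x) + 9 + 16 * Real.exp (2 * x) := by
    refine le_trans (norm_add_le _ _) ?_
    refine add_le_add (le_trans (norm_add_le _ _) (add_le_add (le_trans (norm_add_le _ _)
      (add_le_add ?_ ?_)) ?_)) ?_
    · rw [norm_mul, norm_cexp]; norm_num
    · rw [norm_mul, norm_cexp]
      have : ((2 : ℂ) * (x : ℂ) + 24 * Complex.I * t).re = 2 * x := by simp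
      rw [this]
      exact mul_le_mul_of_nonneg_right h88 (Real.exp_pos _).le
    · rw [norm_mul, norm_cexp]; norm_num
    · rw [norm_mul, norm_cexp]
      have : ((2 : ℂ) * (x : ℂ)).re = 2 * x := by simp
      rw [this]
      exact mul_le_mul_of_nonneg_right h88' (Real.exp_pos _).le
  have hBnorm : ‖u₂ x t - A‖ ≤ 2125 * Real.exp (12 * x) := by
    rw [hdiff]
    refine le_trans (norm_add_le _ _) ?_
    have h1 : ‖Complex.exp (12 * Complex.I * (t : ℂ))‖ = 1 := by
      rw [norm_cexp]; simp
    rw [norm_mul, norm_mul, norm_cexp, h1]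
    have h36 : ‖(-36 : ℂ)‖ = 36 := by simp
    rw [h36]
    have hre : ((4 : ℂ) * (x : ℂ)).re = 4 * x := by simp
    rw [hre]
    have e2 := Real.exp_pos (2 * x)
    have e4 := Real.exp_pos (4 * x)
    have h48 : Real.exp (4 * x) * Real.exp (4 * x) = Real.exp (8 * x) := by
      rw [← Real.exp_add]; ring_nf
    have h42 : Real.exp (4 * x) * Real.exp (2 * x) = Real.exp (6 * x) := by
      rw [← Real.exp_add]; ring_nf
    have m8 : Real.exp (8 * x) ≤ Real.exp (12 * x) := Real.exp_le_exp.2 (by linarith)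
    have m6 : Real.exp (6 * x) ≤ Real.exp (12 * x) := Real.exp_le_exp.2 (by linarith)
    have m4 : Real.exp (4 * x) ≤ Real.exp (12 * x) := Real.exp_le_exp.2 (by linarith)
    have m0 : (1 : ℝ) ≤ Real.exp (12 * x) := by
      rw [show (1:ℝ) = Real.exp 0 by simp]
      exact Real.exp_le_exp.2 (by linarith)
    nlinarith [mul_le_mul_of_nonneg_left hS (by positivity : (0:ℝ) ≤ 36 * Real.exp (4 * x))]
  intro h0
  rw [h0, zero_sub, norm_neg, hAnorm] at hBnorm
  have := Real.exp_pos (12 * x)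
  linarith

/-- The denominator `u₂` does not vanish for `x ≥ 0` and `t ∈ ℝ`; consequently the exact
solution `u = u₁/u₂` of the defocusing NLS is smooth on the quarter plane
`{x ≥ 0, t ≥ 0}`. -/
theorem denominator_nonzero_and_smooth :
    (∀ x ≥ (0:ℝ), ∀ t : ℝ, u₂ x t ≠ 0) ∧
    ContDiffOn ℝ (⊤ : ℕ∞) (fun p : ℝ × ℝ => u₁ p.1 p.2 / u₂ p.1 p.2)
      (Set.Ici 0 ×ˢ Set.Ici 0) := by
  have hne : ∀ x ≥ (0:ℝ), ∀ t : ℝ, u₂ x t ≠ 0 := fun x hx t => u₂_ne x hx t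
  refine ⟨hne, ?_⟩
  have h1 : ContDiff ℝ (⊤ : ℕ∞) fun p : ℝ × ℝ => u₁ p.1 p.2 := by unfold u₁; fun_prop
  have h2 : ContDiff ℝ (⊤ : ℕ∞) fun p : ℝ × ℝ => u₂ p.1 p.2 := by unfold u₂; fun_prop
  have h1' : ContDiffOn ℝ (⊤ : ℕ∞) (fun p : ℝ × ℝ => u₁ p.1 p.2) (Set.Ici 0 ×ˢ Set.Ici 0) :=
    h1.contDiffOn
  have h2' : ContDiffOn ℝ (⊤ : ℕ∞) (fun p : ℝ × ℝ => u₂ p.1 p.2) (Set.Ici 0 ×ˢ Set.Ici 0) :=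
    h2.contDiffOn
  simp only [div_eq_mul_inv]
  exact h1'.mul (h2'.inv fun p hp => hne p.1 hp.1 p.2)

end
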